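/- For m>0 and ρ>0 let ν^{(m)}_ρ(n) = (1−φ)^{m/2} φ^n Γ(m/2+n)/(n! Γ(m/2)) with φ = ρ/(m/2+ρ), set p_m = 1 − ν^{(m)}_ρ(0) and κ_m = −1/(m log m) (for 0<m<1). For each m let η_1,η_2,… be i.i.d. with law ν^{(m)}_ρ and let Δ_{K} = ∑_{i=1}^{K}(1 − δ_{0,η_i}) be the number of non-empty sites among the first K, so that Δ_K has Binomial(K, p_m) distribution. Let K_m∈ℕ be given with K_m/κ_m → δ as m→0. Then: (i) if δ=0, Δ_{K_m} → 0 in distribution; (ii) if δ∈(0,∞), Δ_{K_m} converges in distribution to a Poisson random variable with mean δ/2; (iii) if K_m/κ_m → ∞, then Δ_{K_m}/(K_m p_m) → 1 in probability, and in particular Δ_{K_m} → ∞ in distribution. Here p_m satisfies p_m/( −(m/2)log m ) → 1 as m→0. -/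

import Mathlib

open Filter Topology
open scoped Classical

/-- The single-site marginal `ν^{(m)}_ρ(n) = (1−φ)^{m/2} φ^n Γ(m/2+n)/(n! Γ(m/2))`
with `φ = ρ/(m/2+ρ)` of the homogeneous stationary measure of the SIP at density `ρ`. -/
noncomputable def nuSIP (m ρ : ℝ) (n : ℕ) : ℝ :=
  (1 - ρ / (m / 2 + ρ)) ^ (m / 2) * (ρ / (m / 2 + ρ)) ^ n *
    Real.Gamma (m / 2 + n) / (n.factorial * Real.Gamma (m / 2))

/-- `p_m = 1 − ν^{(m)}_ρ(0)`, the probability that a site is non-empty. -/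
noncomputable def pSIP (m ρ : ℝ) : ℝ := 1 - nuSIP m ρ 0

/-- The scale `κ_m = −1/(m log m)`. -/
noncomputable def kappaScale (m : ℝ) : ℝ := -1 / (m * Real.log m)

/-- Binomial(K,p) probability of the value `n`. -/
noncomputable def binomPMF (K : ℕ) (p : ℝ) (n : ℕ) : ℝ :=
  (K.choose n : ℝ) * p ^ n * (1 - p) ^ (K - n)

/-! Here `ν(0) = (m / (m + 2ρ)) ^ (m / 2) = exp t_m` with `t_m = (m / 2) log (m / (m + 2ρ))`, and
`t_m ∼ (m / 2) log m → 0`; hence `p_m = 1 - exp t_m ∼ -t_m ∼ -(m / 2) log m` and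
`K_m p_m ∼ (K_m / κ_m) / 2`. The three regimes are then the classical limits of `Binomial(K, p)`
with `p → 0`: the Poisson limit when `K p → c` (the case `c = 0` is the point mass at `0`), and,
when `K p → ∞`, concentration of `Δ / (K p)` at `1` by Chebyshev's inequality, the variance
being `K p (1 - p)`. -/

open Real Finset

section Binomial

lemma sum_sq_sub_mul_binomPMF (K : ℕ) (p : ℝ) :
    ∑ n ∈ range (K + 1), ((n : ℝ) - K * p) ^ 2 * binomPMF K p n = K * p * (1 - p) := by
  have h := congrArg (Polynomial.eval p) (bernsteinPolynomial.variance (R := ℝ) K)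
  simp only [Polynomial.eval_finsetSum, Polynomial.eval_mul, Polynomial.eval_pow,
    Polynomial.eval_sub, Polynomial.eval_X, Polynomial.eval_one,
    Polynomial.eval_natCast, bernsteinPolynomial, nsmul_eq_mul] at h
  rw [← h]
  refine sum_congr rfl fun n _ => ?_
  rw [binomPMF]
  ring

variable {K : ℕ} {p : ℝ}

lemma binomPMF_nonneg (h0 : 0 ≤ p) (h1 : p ≤ 1) (n : ℕ) : 0 ≤ binomPMF K p n := by
  unfold binomPMF
  have : 0 ≤ 1 - p := by linarith
  positivity

-- Both sides vanish when `K < n`, where `K - n` truncates to `0`.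
lemma binomPMF_eq_prod (hp : p ≠ 1) (n : ℕ) :
    binomPMF K p n =
      (∏ i ∈ range n, ((K - i : ℝ) * p)) / n.factorial * ((1 - p) ^ K / (1 - p) ^ n) := by
  have hp' : (1 - p : ℝ) ≠ 0 := sub_ne_zero.mpr hp.symm
  rw [prod_mul_distrib, prod_const, card_range, ← descPochhammer_eval_eq_prod_range,
    mul_div_right_comm, ← Nat.cast_choose_eq_descPochhammer_div, binomPMF]
  rcases le_or_gt n K with hn | hn
  · rw [pow_sub₀ _ hp' hn]
    ring
  · simp [Nat.choose_eq_zero_of_lt hn]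

lemma ite_lt_abs_le_sq_div_mul {ε y w : ℝ} (hε : 0 < ε) (hw : 0 ≤ w) :
    (if ε < |y| then w else 0) ≤ y ^ 2 / ε ^ 2 * w := by
  split_ifs with h
  · refine le_mul_of_one_le_left hw ?_
    rw [one_le_div (by positivity), ← sq_abs y]
    exact pow_le_pow_left₀ hε.le h.le 2
  · positivity

lemma sum_binomPMF_relDeviation_le (h0 : 0 ≤ p) (h1 : p ≤ 1) (hKp : 0 < K * p) {ε : ℝ}
    (hε : 0 < ε) :
    ∑ n ∈ range (K + 1), (if ε < |n / (K * p) - 1| then binomPMF K p n else 0) ≤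
      1 / (ε ^ 2 * (K * p)) :=
  calc _ ≤ ∑ n ∈ range (K + 1), (n / (K * p) - 1) ^ 2 / ε ^ 2 * binomPMF K p n :=
        sum_le_sum fun n _ => ite_lt_abs_le_sq_div_mul hε (binomPMF_nonneg h0 h1 n)
    _ = (1 - p) / (ε ^ 2 * (K * p)) := by
        have hsq : ∀ n : ℕ, (n / (K * p) - 1 : ℝ) ^ 2 / ε ^ 2 * binomPMF K p n =
            (n - K * p) ^ 2 * binomPMF K p n / (ε ^ 2 * (K * p) ^ 2) := by
          intro n
          rw [div_sub_one hKp.ne', div_pow]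
          ring
        rw [sum_congr rfl fun n _ => hsq n, ← sum_div, sum_sq_sub_mul_binomPMF]
        field_simp
    _ ≤ 1 / (ε ^ 2 * (K * p)) := by gcongr; linarith

end Binomial

section Limits

variable {α : Type*} {l : Filter α} {N : α → ℕ} {q : α → ℝ}

lemma tendsto_log_one_sub_div (hq : Tendsto q l (𝓝[≠] 0)) :
    Tendsto (fun x => log (1 - q x) / q x) l (𝓝 (-1)) := by
  have hd : HasDerivAt (fun y : ℝ => log (1 - y)) (-1) 0 := by
    simpa using ((hasDerivAt_id (0 : ℝ)).const_sub 1).log (by norm_num)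
  refine ((hasDerivAt_iff_tendsto_slope.mp hd).comp hq).congr fun x => ?_
  simp [slope_def_field]

lemma tendsto_exp_sub_one_div {t : α → ℝ} (ht : Tendsto t l (𝓝[≠] 0)) :
    Tendsto (fun x => (exp (t x) - 1) / t x) l (𝓝 1) := by
  have := (hasDerivAt_iff_tendsto_slope.mp (hasDerivAt_exp 0)).comp ht
  rw [exp_zero] at this
  exact this.congr fun x => by simp [slope_def_field]

lemma tendsto_one_sub_pow_of_tendsto_mul {c : ℝ} (hq : Tendsto q l (𝓝[>] 0))
    (hNq : Tendsto (fun x => (N x : ℝ) * q x) l (𝓝 c)) :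
    Tendsto (fun x => (1 - q x) ^ N x) l (𝓝 (exp (-c))) := by
  have hq_pos : ∀ᶠ x in l, 0 < q x := hq.eventually self_mem_nhdsWithin
  have hq_ne : Tendsto q l (𝓝[≠] 0) :=
    hq.mono_right (nhdsWithin_mono _ fun y (hy : 0 < y) => hy.ne')
  have hlog : Tendsto (fun x => N x * log (1 - q x)) l (𝓝 (-c)) := by
    refine (mul_neg_one c ▸ hNq.mul (tendsto_log_one_sub_div hq_ne)).congr' ?_
    filter_upwards [hq_pos] with x hx
    field_simp
  refine ((continuous_exp.tendsto _).comp hlog).congr' ?_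
  filter_upwards [(tendsto_nhds_of_tendsto_nhdsWithin hq).eventually (gt_mem_nhds one_pos)]
    with x hx
  rw [Function.comp_apply, exp_nat_mul, exp_log (by linarith)]

theorem tendsto_binomPMF_poisson {c : ℝ} (hq : Tendsto q l (𝓝[>] 0))
    (hNq : Tendsto (fun x => (N x : ℝ) * q x) l (𝓝 c)) (n : ℕ) :
    Tendsto (fun x => binomPMF (N x) (q x) n) l (𝓝 (exp (-c) * c ^ n / n.factorial)) := by
  have hq0 : Tendsto q l (𝓝 0) := tendsto_nhds_of_tendsto_nhdsWithin hq
  have hprod : Tendsto (fun x => ∏ i ∈ range n, ((N x - i : ℝ) * q x)) l (𝓝 (c ^ n)) := by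
    have hfactor (i : ℕ) : Tendsto (fun x => (N x - i : ℝ) * q x) l (𝓝 c) := by
      simpa [sub_mul] using hNq.sub (hq0.const_mul (i : ℝ))
    simpa using tendsto_finsetProd (range n) fun i _ => hfactor i
  have hpow : Tendsto (fun x => (1 - q x) ^ n) l (𝓝 1) := by
    simpa using ((tendsto_const_nhds (x := (1 : ℝ))).sub hq0).pow n
  have hlim := (hprod.div_const (n.factorial : ℝ)).mul
    ((tendsto_one_sub_pow_of_tendsto_mul hq hNq).div hpow one_ne_zero)
  rw [div_one, div_mul_eq_mul_div, mul_comm] at hlim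
  refine hlim.congr' ?_
  filter_upwards [hq0.eventually (gt_mem_nhds one_pos)] with x hx
  exact (binomPMF_eq_prod hx.ne n).symm

lemma tendsto_sum_binomPMF_relDeviation (hq : ∀ᶠ x in l, q x ∈ Set.Icc 0 1)
    (hNq : Tendsto (fun x => (N x : ℝ) * q x) l atTop) {ε : ℝ} (hε : 0 < ε) :
    Tendsto (fun x => ∑ n ∈ range (N x + 1),
        if ε < |n / (N x * q x) - 1| then binomPMF (N x) (q x) n else 0) l (𝓝 0) := by
  refine squeeze_zero' ?_ ?_ ((hNq.const_mul_atTop (pow_pos hε 2)).const_div_atTop 1)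
  · filter_upwards [hq] with x hx
    exact sum_nonneg fun n _ => ite_nonneg (binomPMF_nonneg hx.1 hx.2 n) le_rfl
  · filter_upwards [hq, hNq.eventually_gt_atTop 0] with x hx hpos
    exact sum_binomPMF_relDeviation_le hx.1 hx.2 hpos hε

lemma tendsto_sum_range_binomPMF (hq : ∀ᶠ x in l, q x ∈ Set.Icc 0 1)
    (hNq : Tendsto (fun x => (N x : ℝ) * q x) l atTop) (n : ℕ) :
    Tendsto (fun x => ∑ j ∈ range (n + 1), binomPMF (N x) (q x) j) l (𝓝 0) := by
  refine squeeze_zero' ?_ ?_ (tendsto_sum_binomPMF_relDeviation hq hNq one_half_pos)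
  · filter_upwards [hq] with x hx
    exact sum_nonneg fun j _ => binomPMF_nonneg hx.1 hx.2 j
  · filter_upwards [hq, hNq.eventually_gt_atTop (2 * n)] with x hx hlarge
    have hpos : 0 < (N x : ℝ) * q x := by linarith [n.cast_nonneg (α := ℝ)]
    have hn : n ≤ N x := by
      have : (N x : ℝ) * q x ≤ N x := mul_le_of_le_one_right (N x).cast_nonneg hx.2
      exact_mod_cast (show (n : ℝ) ≤ N x by linarith [n.cast_nonneg (α := ℝ)])
    have hfar (j : ℕ) (hj : j ∈ range (n + 1)) : 1 / 2 < |j / (N x * q x) - 1| := by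
      have hjn : (j : ℝ) ≤ n := by exact_mod_cast mem_range_succ_iff.mp hj
      have hsmall : j / (N x * q x) < 1 / 2 := by rw [div_lt_iff₀ hpos]; linarith
      have : 0 ≤ j / (N x * q x) := by positivity
      rw [abs_sub_comm, abs_of_pos (by linarith)]
      linarith
    calc ∑ j ∈ range (n + 1), binomPMF (N x) (q x) j
        = ∑ j ∈ range (n + 1), if 1 / 2 < |j / (N x * q x) - 1| then
            binomPMF (N x) (q x) j else 0 := sum_congr rfl fun j hj => (if_pos (hfar j hj)).symm
      _ ≤ _ := sum_le_sum_of_subset_of_nonneg (range_subset_range.2 (by omega))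
          fun j _ _ => ite_nonneg (binomPMF_nonneg hx.1 hx.2 j) le_rfl

end Limits

section SIP

variable {ρ : ℝ}

noncomputable def logNuSIPZero (m ρ : ℝ) : ℝ := m / 2 * log (m / (m + 2 * ρ))

lemma pSIP_eq_one_sub_exp (hρ : 0 < ρ) {m : ℝ} (hm : 0 < m) :
    pSIP m ρ = 1 - exp (logNuSIPZero m ρ) := by
  have h : 1 - ρ / (m / 2 + ρ) = m / (m + 2 * ρ) := by field_simp; ring
  rw [pSIP, nuSIP, logNuSIPZero, h, rpow_def_of_pos (by positivity)]
  simp [(Gamma_pos_of_pos (half_pos hm)).ne', mul_comm]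

lemma logNuSIPZero_neg (hρ : 0 < ρ) {m : ℝ} (hm : 0 < m) : logNuSIPZero m ρ < 0 :=
  mul_neg_of_pos_of_neg (half_pos hm) <|
    log_neg (by positivity) ((div_lt_one (by positivity)).2 (by linarith))

lemma tendsto_log_div_add_const_div_log (hρ : 0 < ρ) :
    Tendsto (fun m => log (m / (m + 2 * ρ)) / log m) (𝓝[>] 0) (𝓝 1) := by
  have hnum : Tendsto (fun m => log (m + 2 * ρ)) (𝓝[>] 0) (𝓝 (log (2 * ρ))) := by
    have : ContinuousAt (fun m => log (m + 2 * ρ)) 0 :=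
      (continuousAt_id.add continuousAt_const).log (by simp [hρ.ne'])
    simpa using this.tendsto.mono_left nhdsWithin_le_nhds
  have := tendsto_const_nhds (x := (1 : ℝ)) |>.sub (hnum.div_atBot tendsto_log_nhdsGT_zero)
  rw [sub_zero] at this
  refine this.congr' ?_
  filter_upwards [Ioo_mem_nhdsGT one_pos] with m ⟨hm0, hm1⟩
  rw [log_div hm0.ne' (by positivity : 0 < m + 2 * ρ).ne', sub_div,
    div_self (log_neg hm0 hm1).ne]

lemma logNuSIPZero_eventuallyEq : (logNuSIPZero · ρ) =ᶠ[𝓝[>] 0]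
    fun m => m / 2 * log m * (log (m / (m + 2 * ρ)) / log m) := by
  filter_upwards [Ioo_mem_nhdsGT one_pos] with m ⟨hm0, hm1⟩
  rw [logNuSIPZero, mul_assoc, mul_div_cancel₀ _ (log_neg hm0 hm1).ne]

lemma tendsto_half_mul_log_nhdsGT_zero : Tendsto (fun m => m / 2 * log m) (𝓝[>] 0) (𝓝 0) := by
  have := (continuous_mul_log.tendsto 0).mono_left (nhdsWithin_le_nhds (s := Set.Ioi 0))
  simpa [div_mul_eq_mul_div] using this.div_const 2

lemma tendsto_logNuSIPZero (hρ : 0 < ρ) :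
    Tendsto (logNuSIPZero · ρ) (𝓝[>] 0) (𝓝[<] 0) := by
  refine tendsto_nhdsWithin_iff.2 ⟨?_, ?_⟩
  · have := tendsto_half_mul_log_nhdsGT_zero.mul (tendsto_log_div_add_const_div_log hρ)
    simpa using this.congr' logNuSIPZero_eventuallyEq.symm
  · filter_upwards [self_mem_nhdsWithin] with m (hm : 0 < m)
    exact logNuSIPZero_neg hρ hm

theorem tendsto_pSIP_div_neg_half_mul_log (hρ : 0 < ρ) :
    Tendsto (fun m => pSIP m ρ / (-(m / 2) * log m)) (𝓝[>] 0) (𝓝 1) := by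
  have hexp := tendsto_exp_sub_one_div
    ((tendsto_logNuSIPZero hρ).mono_right (nhdsWithin_mono _ fun t (ht : t < 0) => ht.ne))
  refine mul_one (1 : ℝ) ▸ (hexp.mul (tendsto_log_div_add_const_div_log hρ)).congr' ?_
  filter_upwards [Ioo_mem_nhdsGT one_pos] with m ⟨hm0, hm1⟩
  have hlog : log m ≠ 0 := (log_neg hm0 hm1).ne
  have hlog' : log (m / (m + 2 * ρ)) ≠ 0 := by
    have := logNuSIPZero_neg hρ hm0
    rw [logNuSIPZero] at this
    exact fun h => by simp [h] at this
  rw [pSIP_eq_one_sub_exp hρ hm0, logNuSIPZero]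
  field_simp
  ring

lemma tendsto_pSIP (hρ : 0 < ρ) : Tendsto (pSIP · ρ) (𝓝[>] 0) (𝓝[>] 0) := by
  have ht := tendsto_logNuSIPZero hρ
  refine tendsto_nhdsWithin_iff.2 ⟨?_, ?_⟩
  · have hexp := (continuous_exp.tendsto 0).comp (tendsto_nhds_of_tendsto_nhdsWithin ht)
    have : Tendsto (fun m => 1 - exp (logNuSIPZero m ρ)) (𝓝[>] 0) (𝓝 0) := by
      simpa using tendsto_const_nhds (x := (1 : ℝ)) |>.sub hexp
    refine this.congr' ?_
    filter_upwards [self_mem_nhdsWithin] with m (hm : 0 < m)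
    rw [pSIP_eq_one_sub_exp hρ hm]
  · filter_upwards [self_mem_nhdsWithin] with m (hm : 0 < m)
    rw [pSIP_eq_one_sub_exp hρ hm, Set.mem_Ioi, sub_pos, exp_lt_one_iff]
    exact logNuSIPZero_neg hρ hm

end SIP

lemma mul_eventuallyEq_div_kappaScale_mul (k f : ℝ → ℝ) :
    (fun m => k m * f m) =ᶠ[𝓝[>] 0]
      fun m => k m / kappaScale m * (f m / (-(m / 2) * log m)) / 2 := by
  filter_upwards [Ioo_mem_nhdsGT one_pos] with m ⟨hm0, hm1⟩
  have hlog : log m ≠ 0 := (log_neg hm0 hm1).ne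
  rw [kappaScale]
  field_simp

/-- **Number of non-empty sites as `m → 0`**: `Δ_{K_m} ∼ Binomial(K_m, p_m)` satisfies:
(i) if `K_m/κ_m → 0` then `Δ_{K_m} → 0` in distribution; (ii) if `K_m/κ_m → δ ∈ (0,∞)`
then `Δ_{K_m} → Poisson(δ/2)` in distribution; (iii) if `K_m/κ_m → ∞` then
`Δ_{K_m}/(K_m p_m) → 1` in probability and `Δ_{K_m} → ∞` in distribution. Moreover
`p_m = −(m/2)(log m)(1+o(1))`. -/
theorem sip_nonempty_sites_scaling
    (ρ : ℝ) (hρ : 0 < ρ) (K : ℝ → ℕ) :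
    -- asymptotics of `p_m`
    Tendsto (fun m : ℝ => pSIP m ρ / (-(m / 2) * Real.log m)) (𝓝[>] 0) (𝓝 1) ∧
    -- (i) `K_m ≪ κ_m`
    ((Tendsto (fun m : ℝ => (K m : ℝ) / kappaScale m) (𝓝[>] 0) (𝓝 0)) →
      ∀ n : ℕ,
        Tendsto (fun m : ℝ => binomPMF (K m) (pSIP m ρ) n) (𝓝[>] 0)
          (𝓝 (if n = 0 then 1 else 0))) ∧
    -- (ii) `K_m/κ_m → δ ∈ (0,∞)`: Poisson(δ/2) limit
    (∀ δ : ℝ, 0 < δ →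
      (Tendsto (fun m : ℝ => (K m : ℝ) / kappaScale m) (𝓝[>] 0) (𝓝 δ)) →
      ∀ n : ℕ,
        Tendsto (fun m : ℝ => binomPMF (K m) (pSIP m ρ) n) (𝓝[>] 0)
          (𝓝 (Real.exp (-(δ / 2)) * (δ / 2) ^ n / n.factorial))) ∧
    -- (iii) `K_m ≫ κ_m`: law of large numbers and escape to infinity
    ((Tendsto (fun m : ℝ => (K m : ℝ) / kappaScale m) (𝓝[>] 0) atTop) →
      (∀ ε : ℝ, 0 < ε →
        Tendsto
          (fun m : ℝ => ∑ n ∈ Finset.range (K m + 1),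
            if ε < |(n : ℝ) / ((K m : ℝ) * pSIP m ρ) - 1| then
              binomPMF (K m) (pSIP m ρ) n else 0)
          (𝓝[>] 0) (𝓝 0)) ∧
      (∀ n : ℕ,
        Tendsto (fun m : ℝ => ∑ j ∈ Finset.range (n + 1), binomPMF (K m) (pSIP m ρ) j)
          (𝓝[>] 0) (𝓝 0))) := by
  have hp := tendsto_pSIP_div_neg_half_mul_log hρ
  have hKp := mul_eventuallyEq_div_kappaScale_mul (fun m => (K m : ℝ)) (pSIP · ρ)
  have poisson (δ : ℝ)
      (hδ : Tendsto (fun m => (K m : ℝ) / kappaScale m) (𝓝[>] 0) (𝓝 δ)) (n : ℕ) :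
      Tendsto (fun m => binomPMF (K m) (pSIP m ρ) n) (𝓝[>] 0)
        (𝓝 (exp (-(δ / 2)) * (δ / 2) ^ n / n.factorial)) :=
    tendsto_binomPMF_poisson (tendsto_pSIP hρ) (by
      simpa using ((hδ.mul hp).div_const 2).congr' hKp.symm) n
  refine ⟨hp, fun h0 n => ?_, fun δ _ hδ => poisson δ hδ, fun hinf => ?_⟩
  · convert poisson 0 h0 n using 2
    rcases n with _ | n <;> simp
  · have hKp_top : Tendsto (fun m => (K m : ℝ) * pSIP m ρ) (𝓝[>] 0) atTop :=
      ((hinf.atTop_mul_pos one_pos hp).atTop_div_const two_pos).congr' hKp.symm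
    have hq : ∀ᶠ m in 𝓝[>] 0, pSIP m ρ ∈ Set.Icc 0 1 :=
      ((tendsto_pSIP hρ).eventually (Ioo_mem_nhdsGT one_pos)).mono
        fun _ h => Set.Ioo_subset_Icc_self h
    exact ⟨fun ε hε => tendsto_sum_binomPMF_relDeviation hq hKp_top hε,
      tendsto_sum_range_binomPMF hq hKp_top⟩
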